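/- arXiv:2303.01208 — 4 statements merged into one kernel-verified Lean document; each statement's English description precedes it below -/
import Mathlib

section
/- Let Ω ⊆ ℝⁿ be a nonempty, open and convex set, let y be an exposed point of the closure of Ω, and let ρ > 0. Then there exist z ∈ Ω and s > 0 such that (B̄(2z, s) − Ω) ∩ Ω ⊆ B(y, ρ). -/
open Set Metric
open scoped RealInnerProductSpace Pointwise

/-! The exposing functional `l` is strictly below `l y` on the compact set
`closure Ω ∩ sphere y ρ`, hence below `l y - ε` there. By convexity every point of `closure Ω`
outside `B(y, ρ)` is dominated by a point of that set, so the slice `{l > l y - ε}` of `closure Ω`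
lies in `B(y, ρ)`. Taking `z ∈ Ω` with `l z` close to `l y` and `w` close to `2z`, every `w - v`
with `v ∈ Ω` satisfies `l (w - v) ≈ 2 l z - l v ≥ l y - ε`, so it lies in that slice. -/

section

variable {E : Type*} [NormedAddCommGroup E] [NormedSpace ℝ E]

theorem Convex.exists_mem_segment_mem_sphere {K : Set E} (hK : Convex ℝ K) {x y : E}
    (hx : x ∈ K) (hy : y ∈ K) {ρ : ℝ} (hρ : 0 ≤ ρ) (hxy : ρ ≤ dist x y) :
    ∃ p ∈ segment ℝ y x, p ∈ K ∩ sphere y ρ := by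
  obtain ⟨p, hp, hpρ⟩ := (convex_segment y x).isPreconnected.intermediate_value
    (left_mem_segment ℝ y x) (right_mem_segment ℝ y x) (f := (dist · y))
    (continuous_id.dist continuous_const).continuousOn ⟨by rwa [dist_self], hxy⟩
  exact ⟨p, hp, hK.segment_subset hy hx hp, hpρ⟩

theorem exists_slice_subset_ball_of_exposed [ProperSpace E] {K : Set E} (hKc : IsClosed K)
    (hK : Convex ℝ K) {y : E} (hy : y ∈ K) {l : StrongDual ℝ E}
    (hl : ∀ x ∈ K, x ≠ y → l x < l y) {ρ : ℝ} (hρ : 0 < ρ) :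
    ∃ ε > 0, ∀ x ∈ K, l y - ε < l x → x ∈ ball y ρ := by
  have hgap : ∀ p ∈ K ∩ sphere y ρ, 0 < l y - l p := fun p hp ↦
    sub_pos.2 <| hl p hp.1 <| ne_of_mem_sphere hp.2 hρ.ne'
  obtain ⟨ε, hε, hε_le⟩ := ((isCompact_sphere y ρ).inter_left hKc).exists_forall_le'
    (f := fun p ↦ l y - l p) (continuous_const.sub l.continuous).continuousOn hgap
  refine ⟨ε, hε, fun x hx hlx ↦ mem_ball.2 (not_le.1 fun hxy ↦ ?_)⟩
  obtain ⟨p, hp_seg, hpK⟩ := hK.exists_mem_segment_mem_sphere hx hy hρ.le hxy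
  have hmin : min (l y) (l x) ≤ l p :=
    (l.toLinearMap.concaveOn convex_univ).ge_on_segment (mem_univ _) (mem_univ _) hp_seg
  have hεp : ε ≤ l y - l p := hε_le p hpK
  exact hmin.not_gt (lt_min (by linarith) (by linarith))

theorem exists_closedBall_two_smul_sub_subset {S : Set E} {y : E} (hy : y ∈ closure S)
    {l : StrongDual ℝ E} (hl : ∀ v ∈ S, l v ≤ l y) {ε : ℝ} (hε : 0 < ε) :
    ∃ z ∈ S, ∃ s > 0, closedBall ((2 : ℝ) • z) s - S ⊆ {u | l y - ε < l u} := by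
  obtain ⟨z, hz_lt, hz⟩ : ∃ z ∈ l ⁻¹' Ioi (l y - ε / 4), z ∈ S :=
    mem_closure_iff.1 hy _ (isOpen_Ioi.preimage l.continuous) (by simpa using hε)
  have hnhds : l ⁻¹' Ioi (2 * l z - ε / 2) ∈ nhds ((2 : ℝ) • z) :=
    (isOpen_Ioi.preimage l.continuous).mem_nhds (by rw [mem_preimage, mem_Ioi, map_smul, smul_eq_mul]; linarith)
  obtain ⟨s, hs, hs_sub⟩ := nhds_basis_closedBall.mem_iff.1 hnhds
  refine ⟨z, hz, s, hs, ?_⟩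
  rintro _ ⟨w, hw, v, hv, rfl⟩
  have hlw : 2 * l z - ε / 2 < l w := hs_sub hw
  have hlz : l y - ε / 4 < l z := hz_lt
  show l y - ε < l (w - v)
  rw [map_sub]
  linarith [hl v hv]

end

theorem exists_ball_of_exposed_point_general
    (n : ℕ) (Ω : Set (EuclideanSpace ℝ (Fin n)))
    (hconv : Convex ℝ Ω)
    (y : EuclideanSpace ℝ (Fin n)) (hy : y ∈ closure Ω)
    (hexp : ∃ a : EuclideanSpace ℝ (Fin n), a ≠ 0 ∧
        ∀ x ∈ closure Ω, x ≠ y → ⟪x, a⟫ < ⟪y, a⟫)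
    (ρ : ℝ) (hρ : 0 < ρ) :
    ∃ z ∈ Ω, ∃ s : ℝ, 0 < s ∧
      (closedBall ((2 : ℝ) • z) s - Ω) ∩ Ω ⊆ ball y ρ := by
  obtain ⟨a, -, ha⟩ := hexp
  set l := innerSL ℝ a
  have hl : ∀ x ∈ closure Ω, x ≠ y → l x < l y := fun x hx hxy ↦ by
    simpa only [l, innerSL_apply_apply, real_inner_comm a] using ha x hx hxy
  obtain ⟨ε, hε, hslice⟩ :=
    exists_slice_subset_ball_of_exposed isClosed_closure hconv.closure hy hl hρ
  have hle : ∀ v ∈ Ω, l v ≤ l y := fun v hv ↦ by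
    rcases eq_or_ne v y with rfl | hvy
    exacts [le_rfl, (hl v (subset_closure hv) hvy).le]
  obtain ⟨z, hz, s, hs, hsub⟩ := exists_closedBall_two_smul_sub_subset hy hle hε
  exact ⟨z, hz, s, hs, fun u hu ↦ hslice u (subset_closure hu.2) (hsub hu.1)⟩

/-- If `y` is an exposed point of the closure of a nonempty open convex set `Ω ⊆ ℝⁿ`
and `ρ > 0`, then there are `z ∈ Ω` and `s > 0` with `(B̄(2z, s) − Ω) ∩ Ω ⊆ B(y, ρ)`. -/
theorem exists_ball_of_exposed_point
    (n : ℕ) (Ω : Set (EuclideanSpace ℝ (Fin n)))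
    (hne : Ω.Nonempty) (hop : IsOpen Ω) (hconv : Convex ℝ Ω)
    (y : EuclideanSpace ℝ (Fin n)) (hy : y ∈ closure Ω)
    (hexp : ∃ a : EuclideanSpace ℝ (Fin n), a ≠ 0 ∧
        ∀ x ∈ closure Ω, x ≠ y → ⟪x, a⟫ < ⟪y, a⟫)
    (ρ : ℝ) (hρ : 0 < ρ) :
    ∃ z ∈ Ω, ∃ s : ℝ, 0 < s ∧
      (closedBall ((2 : ℝ) • z) s - Ω) ∩ Ω ⊆ ball y ρ :=
  exists_ball_of_exposed_point_general n Ω hconv y hy hexp ρ hρ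
end

section
/- Let Ω ⊆ ℝⁿ be a nonempty, open and convex set and let y₁, …, y_k be distinct exposed points of the closure of Ω. Then there exist points z₁, …, z_k ∈ Ω and s > 0 such that for all i ≠ j, (B̄(2z_i, s) − Ω) ∩ (B̄(2z_j, s) − Ω) ∩ Ω = ∅. -/
set_option maxHeartbeats 1000000
open Set Metric
open scoped RealInnerProductSpace Pointwise

lemma slice_lemma {n : ℕ} (C : Set (EuclideanSpace ℝ (Fin n))) (hC : IsClosed C)
    (hconv : Convex ℝ C) (y a : EuclideanSpace ℝ (Fin n)) (hy : y ∈ C)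
    (hsep : ∀ x ∈ C, x ≠ y → ⟪x, a⟫ < ⟪y, a⟫) (r : ℝ) (hr : 0 < r) :
    ∃ ε > 0, ∀ x ∈ C, ⟪y, a⟫ - ε < ⟪x, a⟫ → dist x y < r := by
  have key : ∀ x ∈ C, r ≤ dist x y → ∃ v, v ∈ C ∩ sphere y r ∧ ⟪x, a⟫ ≤ ⟪v, a⟫ := by
    intro x hx hxd
    have hxy : x ≠ y := by
      intro h; rw [h, dist_self] at hxd; linarith
    have hd0 : (0:ℝ) < dist x y := lt_of_lt_of_le hr hxd
    set t : ℝ := r / dist x y with ht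
    have ht0 : 0 < t := div_pos hr hd0
    have ht1 : t ≤ 1 := (div_le_one hd0).mpr hxd
    refine ⟨(1 - t) • y + t • x, ⟨hconv hy hx (by linarith) (le_of_lt ht0) (by ring), ?_⟩, ?_⟩
    · have : (1 - t) • y + t • x - y = t • (x - y) := by
        module
      rw [mem_sphere_iff_norm, this, norm_smul, Real.norm_eq_abs, abs_of_pos ht0]
      rw [ht, ← dist_eq_norm]
      field_simp
    · have hxlt : ⟪x, a⟫ < ⟪y, a⟫ := hsep x hx hxy
      have : ⟪(1 - t) • y + t • x, a⟫ = (1 - t) * ⟪y, a⟫ + t * ⟪x, a⟫ := by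
        rw [inner_add_left, real_inner_smul_left, real_inner_smul_left]
      rw [this]
      nlinarith
  by_cases hK : (C ∩ sphere y r).Nonempty
  · have hKc : IsCompact (C ∩ sphere y r) := (isCompact_sphere y r).inter_left hC
    obtain ⟨x₀, hx₀, hmax⟩ := hKc.exists_isMaxOn hK
      (Continuous.continuousOn (Continuous.inner continuous_id continuous_const : Continuous fun x => ⟪x, a⟫))
    have hx₀y : x₀ ≠ y := by
      intro h
      have := hx₀.2
      rw [h, mem_sphere_iff_norm, sub_self, norm_zero] at this
      linarith [this ▸ hr]
    have hε : 0 < ⟪y, a⟫ - ⟪x₀, a⟫ := sub_pos.mpr (hsep x₀ hx₀.1 hx₀y)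
    refine ⟨⟪y, a⟫ - ⟪x₀, a⟫, hε, ?_⟩
    intro x hx hlt
    by_contra hge
    push_neg at hge
    obtain ⟨v, hv, hva⟩ := key x hx hge
    have hvx : ⟪v, a⟫ ≤ ⟪x₀, a⟫ := hmax hv
    simp only [sub_sub_cancel] at hlt
    linarith
  · refine ⟨1, one_pos, ?_⟩
    intro x hx _
    by_contra hge
    push_neg at hge
    obtain ⟨v, hv, _⟩ := key x hx hge
    exact hK ⟨v, hv⟩

/-- Given distinct exposed points `y₁, …, y_k` of the closure of a nonempty open convex
set `Ω ⊆ ℝⁿ`, there are `z₁, …, z_k ∈ Ω` and `s > 0` such that the sets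
`(B̄(2zᵢ, s) − Ω) ∩ Ω` are pairwise disjoint. -/
theorem exists_separated_balls_of_exposed_points
    (n k : ℕ) (Ω : Set (EuclideanSpace ℝ (Fin n)))
    (hne : Ω.Nonempty) (hop : IsOpen Ω) (hconv : Convex ℝ Ω)
    (y : Fin k → EuclideanSpace ℝ (Fin n)) (hinj : Function.Injective y)
    (hy : ∀ i, y i ∈ closure Ω)
    (hexp : ∀ i, ∃ a : EuclideanSpace ℝ (Fin n), a ≠ 0 ∧
        ∀ x ∈ closure Ω, x ≠ y i → ⟪x, a⟫ < ⟪y i, a⟫) :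
    ∃ z : Fin k → EuclideanSpace ℝ (Fin n), (∀ i, z i ∈ Ω) ∧
      ∃ s : ℝ, 0 < s ∧ ∀ i j, i ≠ j →
        (closedBall ((2 : ℝ) • z i) s - Ω) ∩ (closedBall ((2 : ℝ) • z j) s - Ω) ∩ Ω = ∅ := by
  obtain ⟨x₀, hx₀⟩ := hne
  by_cases htriv : ∀ i j : Fin k, i = j
  · exact ⟨fun _ => x₀, fun _ => hx₀, 1, one_pos,
      fun i j hij => absurd (htriv i j) hij⟩
  push_neg at htriv
  obtain ⟨i₀, j₀, hij₀⟩ := htriv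
  -- a nonempty finset of distinct pairs
  set P : Finset (Fin k × Fin k) := Finset.univ.filter (fun p => p.1 ≠ p.2) with hP
  have hPne : P.Nonempty := ⟨(i₀, j₀), by simp [hP, hij₀]⟩
  obtain ⟨p₀, hp₀mem, hp₀min⟩ := P.exists_min_image (fun p => dist (y p.1) (y p.2)) hPne
  set d : ℝ := dist (y p₀.1) (y p₀.2) with hd
  have hd0 : 0 < d := by
    have hp' : p₀.1 ≠ p₀.2 := by simpa [hP] using hp₀mem
    exact dist_pos.mpr (fun h => hp' (hinj h))
  -- exposing functionals and slice widths
  choose a ha0 hsep using hexp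
  choose ε hε0 hεprop using fun i =>
    slice_lemma (closure Ω) isClosed_closure (hconv.closure) (y i) (a i) (hy i)
      (hsep i) (d / 2) (by linarith)
  have hub : ∀ i, ∀ x ∈ closure Ω, ⟪x, a i⟫ ≤ ⟪y i, a i⟫ := by
    intro i x hx
    by_cases h : x = y i
    · rw [h]
    · exact le_of_lt (hsep i x hx h)
  -- choose z i ∈ Ω near the maximum
  have hzex : ∀ i, ∃ z, (⟪y i, a i⟫ - ε i / 4 < ⟪z, a i⟫) ∧ z ∈ Ω := by
    intro i
    have hU : IsOpen {x : EuclideanSpace ℝ (Fin n) | ⟪y i, a i⟫ - ε i / 4 < ⟪x, a i⟫} :=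
      isOpen_lt continuous_const (Continuous.inner continuous_id continuous_const)
    have hmem : y i ∈ {x : EuclideanSpace ℝ (Fin n) | ⟪y i, a i⟫ - ε i / 4 < ⟪x, a i⟫} := by
      simp only [Set.mem_setOf_eq]
      linarith [hε0 i]
    obtain ⟨z, hz1, hz2⟩ := mem_closure_iff.mp (hy i) _ hU hmem
    exact ⟨z, hz1, hz2⟩
  choose z hz1 hz2 using hzex
  -- choose s
  have hkne : Nonempty (Fin k) := ⟨i₀⟩
  obtain ⟨m₀, _, hm₀min⟩ := Finset.univ.exists_min_image
    (fun i => ε i / (2 * ‖a i‖ + 2)) Finset.univ_nonempty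
  set s : ℝ := ε m₀ / (2 * ‖a m₀‖ + 2) with hs
  have hs0 : 0 < s := by
    have : (0:ℝ) < 2 * ‖a m₀‖ + 2 := by positivity
    exact div_pos (hε0 m₀) this
  have hsmall : ∀ i, s * ‖a i‖ < ε i / 2 := by
    intro i
    have h1 : s ≤ ε i / (2 * ‖a i‖ + 2) := hm₀min i (Finset.mem_univ i)
    have h2 : (0:ℝ) < 2 * ‖a i‖ + 2 := by positivity
    have h3 : s * ‖a i‖ ≤ (ε i / (2 * ‖a i‖ + 2)) * ‖a i‖ :=
      mul_le_mul_of_nonneg_right h1 (norm_nonneg _)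
    have h4 : (ε i / (2 * ‖a i‖ + 2)) * ‖a i‖ < ε i / 2 := by
      rw [div_mul_eq_mul_div, div_lt_div_iff₀ h2 (by norm_num : (0:ℝ) < 2)]
      nlinarith [norm_nonneg (a i), hε0 i]
    linarith
  refine ⟨z, hz2, s, hs0, ?_⟩
  intro i j hij
  rw [eq_empty_iff_forall_notMem]
  rintro u ⟨⟨hui, huj⟩, huΩ⟩
  -- key: membership in the i-th set forces u close to y i
  have main : ∀ m, u ∈ closedBall ((2 : ℝ) • z m) s - Ω → dist u (y m) < d / 2 := by
    intro m hm
    obtain ⟨b, hb, ω, hω, hbω⟩ := hm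
    have h1 : ‖b - (2:ℝ) • z m‖ ≤ s := mem_closedBall_iff_norm.mp hb
    have h2 : |⟪b - (2:ℝ) • z m, a m⟫| ≤ ‖b - (2:ℝ) • z m‖ * ‖a m‖ :=
      abs_real_inner_le_norm _ _
    have h3 : -(s * ‖a m‖) ≤ ⟪b - (2:ℝ) • z m, a m⟫ := by
      have := neg_abs_le (⟪b - (2:ℝ) • z m, a m⟫)
      have h4 : ‖b - (2:ℝ) • z m‖ * ‖a m‖ ≤ s * ‖a m‖ :=
        mul_le_mul_of_nonneg_right h1 (norm_nonneg _)
      linarith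
    have h5 : ⟪b, a m⟫ = ⟪b - (2:ℝ) • z m, a m⟫ + 2 * ⟪z m, a m⟫ := by
      rw [inner_sub_left, real_inner_smul_left]; ring
    have h6 : ⟪ω, a m⟫ ≤ ⟪y m, a m⟫ := hub m ω (subset_closure hω)
    have h7 : ⟪u, a m⟫ = ⟪b, a m⟫ - ⟪ω, a m⟫ := by
      rw [← hbω, inner_sub_left]
    have h8 : ⟪y m, a m⟫ - ε m < ⟪u, a m⟫ := by
      have := hz1 m
      have := hsmall m
      linarith
    exact hεprop m u (subset_closure huΩ) h8
  have di : dist u (y i) < d / 2 := main i hui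
  have dj : dist u (y j) < d / 2 := main j huj
  have hle : d ≤ dist (y i) (y j) := by
    have hmemP : (i, j) ∈ P := by simp [hP, hij]
    exact hp₀min (i, j) hmemP
  have : dist (y i) (y j) ≤ dist (y i) u + dist u (y j) := dist_triangle _ _ _
  rw [dist_comm (y i) u] at this
  linarith
end

section
/- Every closed convex set K ⊆ ℝ² has only finitely many extreme half-lines. -/
/-!
An extreme half-line `x + ℝ≥0 u` of a closed convex set `K` has its direction `u` in the
recession cone of `K`, spanning an extreme ray of that cone, and `-u` is not a recession
direction. A pointed cone in the plane has at most two extreme rays, so among any three extreme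
half-lines two point the same way. The line through an extreme half-line supports `K`; hence two
distinct parallel ones confine `K` to the strip between their lines. Then every recession
direction is parallel to them, so every extreme half-line lies on one of the two boundary lines,
where it coincides with the given one. So `K` has at most two extreme half-lines.
-/

open Set

def IsExtremeHalfLine {n : ℕ} (K ℓ : Set (EuclideanSpace ℝ (Fin n))) : Prop :=
  (∃ x₀ u : EuclideanSpace ℝ (Fin n), u ≠ 0 ∧
      ℓ = {p | ∃ t : ℝ, 0 ≤ t ∧ p = x₀ + t • u}) ∧
    ℓ ⊆ frontier K ∧
    ∀ x ∈ K, ∀ y ∈ K, (openSegment ℝ x y ∩ ℓ).Nonempty → x ∈ ℓ ∧ y ∈ ℓ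

section HalfLine

variable {E : Type*} [AddCommGroup E] [Module ℝ E]

def halfLine (x u : E) : Set E := {p | ∃ t : ℝ, 0 ≤ t ∧ p = x + t • u}

def recessionCone (K : Set E) : Set E := {v | ∀ y ∈ K, ∀ t : ℝ, 0 ≤ t → y + t • v ∈ K}

variable {K : Set E} {x y u v w : E}

theorem add_smul_mem_halfLine {t : ℝ} (ht : 0 ≤ t) : x + t • u ∈ halfLine x u := ⟨t, ht, rfl⟩

theorem left_mem_halfLine : x ∈ halfLine x u := ⟨0, le_rfl, by simp⟩

theorem halfLine_smul {c : ℝ} (hc : 0 < c) : halfLine x (c • u) = halfLine x u := by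
  ext p
  constructor
  · rintro ⟨t, ht, rfl⟩
    exact ⟨t * c, by positivity, by rw [mul_smul]⟩
  · rintro ⟨t, ht, rfl⟩
    exact ⟨t / c, by positivity, by rw [smul_smul, div_mul_cancel₀ _ hc.ne']⟩

theorem add_mem_recessionCone (hv : v ∈ recessionCone K) (hw : w ∈ recessionCone K) :
    v + w ∈ recessionCone K := fun y hy t ht => by
  simpa only [smul_add, add_assoc] using hw _ (hv y hy t ht) t ht

theorem smul_mem_recessionCone (hv : v ∈ recessionCone K) {c : ℝ} (hc : 0 ≤ c) :
    c • v ∈ recessionCone K := fun y hy t ht => by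
  simpa only [smul_smul] using hv y hy (t * c) (mul_nonneg ht hc)

theorem mem_recessionCone_of_halfLine_subset [TopologicalSpace E] [IsTopologicalAddGroup E]
    [ContinuousSMul ℝ E] (hK : IsClosed K) (hconv : Convex ℝ K) (hℓ : halfLine x u ⊆ K) :
    u ∈ recessionCone K := by
  intro y hy t ht
  -- `y + t • u` is the limit, as `ε → 0⁺`, of `(1 - ε) • y + ε • (x + (t / ε) • u) ∈ K`.
  have hlim : Filter.Tendsto (fun ε : ℝ => (1 - ε) • y + ε • x + t • u) (nhdsWithin 0 (Ioi 0))
      (nhds (y + t • u)) := by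
    have : Continuous (fun ε : ℝ => (1 - ε) • y + ε • x + t • u) := by fun_prop
    simpa using (this.tendsto 0).mono_left nhdsWithin_le_nhds
  refine hK.mem_of_tendsto hlim ?_
  filter_upwards [Ioo_mem_nhdsGT (zero_lt_one' ℝ)] with ε ⟨hε₀, hε₁⟩
  have := hconv hy (hℓ (add_smul_mem_halfLine (div_nonneg ht hε₀.le))) (by linarith) hε₀.le
    (sub_add_cancel 1 ε)
  convert this using 1
  rw [smul_add, smul_smul, mul_div_cancel₀ _ hε₀.ne', add_assoc]

namespace IsExtreme

theorem exists_nonneg_smul_of_add_eq (hℓ : IsExtreme ℝ K (halfLine x u))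
    (hv : v ∈ recessionCone K) (hw : w ∈ recessionCone K) (hvw : v + w = u) :
    ∃ s : ℝ, 0 ≤ s ∧ v = s • u := by
  have hx : x ∈ K := hℓ.subset left_mem_halfLine
  have hmid : x + (1 : ℝ) • u ∈ openSegment ℝ (x + (2 : ℝ) • v) (x + (2 : ℝ) • w) :=
    ⟨1 / 2, 1 / 2, by norm_num, by norm_num, by norm_num, by rw [← hvw]; module⟩
  obtain ⟨s, hs, hsv⟩ := hℓ.left_mem_of_mem_openSegment (hv x hx 2 zero_le_two)
    (hw x hx 2 zero_le_two) (add_smul_mem_halfLine zero_le_one) hmid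
  refine ⟨s / 2, by positivity, ?_⟩
  have h2v : (2 : ℝ) • v = s • u := add_left_cancel hsv
  rw [div_eq_inv_mul, mul_smul, ← h2v, smul_smul]
  norm_num

theorem neg_notMem_recessionCone (hℓ : IsExtreme ℝ K (halfLine x u)) (hu₀ : u ≠ 0)
    (hu : u ∈ recessionCone K) : -u ∉ recessionCone K := by
  intro hneg
  obtain ⟨s, hs, hsu⟩ := hℓ.exists_nonneg_smul_of_add_eq hneg
    (smul_mem_recessionCone hu zero_le_two) (by module)
  have : (s + 1) • u = 0 := by rw [add_smul, ← hsu]; module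
  exact hu₀ ((smul_eq_zero.mp this).resolve_left (by positivity))

theorem exists_pos_smul_of_eq_add (hℓ : IsExtreme ℝ K (halfLine x u))
    (hv : v ∈ recessionCone K) (hw : w ∈ recessionCone K) (hv₀ : v ≠ 0) {a b : ℝ} (ha : 0 < a)
    (hb : 0 ≤ b) (huvw : u = a • v + b • w) : ∃ c : ℝ, 0 < c ∧ v = c • u := by
  obtain ⟨s, hs, hsu⟩ := hℓ.exists_nonneg_smul_of_add_eq (smul_mem_recessionCone hv ha.le)
    (smul_mem_recessionCone hw hb) huvw.symm
  have hs₀ : s ≠ 0 := by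
    rintro rfl
    exact hv₀ ((smul_eq_zero.mp (hsu.trans (zero_smul ℝ u))).resolve_left ha.ne')
  refine ⟨s / a, div_pos (hs.lt_of_ne' hs₀) ha, ?_⟩
  rw [div_eq_inv_mul, mul_smul, ← hsu, smul_smul, inv_mul_cancel₀ ha.ne', one_smul]

theorem eq_of_eq_add_smul (hℓ : IsExtreme ℝ K (halfLine x u))
    (hℓ' : IsExtreme ℝ K (halfLine y u)) (hu₀ : u ≠ 0) {r : ℝ} (hy : y = x + r • u) : x = y := by
  wlog hr : 0 ≤ r generalizing x y r
  · exact (this hℓ' hℓ (r := -r) (by rw [hy]; module) (by linarith)).symm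
  have hmid : y ∈ openSegment ℝ x (y + r • u) := by
    rcases hr.eq_or_lt with rfl | hr
    · simp [hy]
    exact ⟨1 / 2, 1 / 2, by norm_num, by norm_num, by norm_num, by rw [hy]; module⟩
  obtain ⟨s, hs, hxs⟩ := hℓ'.left_mem_of_mem_openSegment (hℓ.subset left_mem_halfLine)
    (hℓ'.subset (add_smul_mem_halfLine hr)) left_mem_halfLine hmid
  have : (r + s) • u = 0 := by rw [hy] at hxs; linear_combination (norm := module) -hxs
  have hrs : r + s = 0 := (smul_eq_zero.mp this).resolve_right hu₀
  rw [hy, show r = 0 by linarith, zero_smul, add_zero]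

theorem exists_eq_add_smul_of_mem_openSegment (hℓ : IsExtreme ℝ K (halfLine x u))
    (hu : u ∈ recessionCone K) {p q : E} (hp : p ∈ K) (hq : q ∈ K) {c : ℝ}
    (hpq : x + c • u ∈ openSegment ℝ p q) : ∃ s : ℝ, p = x + s • u := by
  have hp' : |c| • u + p ∈ K := by simpa only [add_comm] using hu p hp |c| (abs_nonneg c)
  have hq' : |c| • u + q ∈ K := by simpa only [add_comm] using hu q hq |c| (abs_nonneg c)
  -- Pushing the segment by `|c| • u` moves its point on the line onto the half-line.
  have hz : |c| • u + (x + c • u) ∈ halfLine x u :=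
    ⟨c + |c|, by linarith [neg_abs_le c], by module⟩
  obtain ⟨s, -, hs⟩ :=
    hℓ.left_mem_of_mem_openSegment hp' hq' hz ((mem_openSegment_translate ℝ _).mpr hpq)
  exact ⟨s - |c|, by linear_combination (norm := module) hs⟩

theorem map_notMem_Ioo (hℓ : IsExtreme ℝ K (halfLine x u)) (hu : u ∈ recessionCone K)
    (φ : E →ₗ[ℝ] ℝ) (hφu : φ u = 0) (hφ : ∀ v, φ v = 0 → ∃ t : ℝ, v = t • u) {p q : E}
    (hp : p ∈ K) (hq : q ∈ K) : φ x ∉ Ioo (φ p) (φ q) := by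
  rintro ⟨hpx, hxq⟩
  set θ := (φ x - φ p) / (φ q - φ p)
  have hθ₀ : 0 < θ := div_pos (by linarith) (by linarith)
  have hθ₁ : θ < 1 := (div_lt_one (by linarith)).mpr (by linarith)
  have hφz : φ ((1 - θ) • p + θ • q - x) = 0 := by
    have : φ q - φ p ≠ 0 := by linarith
    simp only [map_sub, map_add, map_smul, smul_eq_mul, θ]
    field_simp
    ring
  obtain ⟨c, hc⟩ := hφ _ hφz
  obtain ⟨s, rfl⟩ := hℓ.exists_eq_add_smul_of_mem_openSegment hu hp hq (c := c)
    ⟨1 - θ, θ, by linarith, hθ₀, by ring, by rw [← hc]; abel⟩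
  simp [hφu] at hpx

theorem exists_pos_smul_of_eq_smul_add_smul (hℓ : IsExtreme ℝ K (halfLine x u))
    (hℓ' : IsExtreme ℝ K (halfLine y w)) (hu : u ∈ recessionCone K) (hv : v ∈ recessionCone K)
    (hw : w ∈ recessionCone K) (hu₀ : u ≠ 0) (hw₀ : w ≠ 0) {a b : ℝ} (ha : 0 < a)
    (hwuv : w = a • u + b • v) : ∃ c : ℝ, 0 < c ∧ w = c • u := by
  rcases le_or_gt 0 b with hb | hb
  · obtain ⟨c, hc, rfl⟩ := hℓ'.exists_pos_smul_of_eq_add hu hv hu₀ ha hb hwuv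
    exact ⟨c⁻¹, inv_pos.mpr hc, by rw [smul_smul, inv_mul_cancel₀ hc.ne', one_smul]⟩
  · refine hℓ.exists_pos_smul_of_eq_add hw hv hw₀ (inv_pos.mpr ha)
      (div_nonneg (neg_nonneg.mpr hb.le) ha.le) ?_
    rw [hwuv, smul_add, smul_smul, inv_mul_cancel₀ ha.ne', one_smul, smul_smul]
    module

end IsExtreme

end HalfLine

theorem eq_zero_of_forall_add_mul_mem_Icc {a b c d : ℝ}
    (h : ∀ t : ℝ, 0 ≤ t → a + t * b ∈ Icc c d) : b = 0 := by
  obtain ⟨hca, had⟩ := h 0 le_rfl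
  rcases lt_trichotomy b 0 with hb | hb | hb
  · have := (h ((d - c + 1) / -b) (div_nonneg (by linarith) (by linarith))).1
    rw [div_mul_eq_mul_div, div_neg, mul_div_cancel_right₀ _ hb.ne] at this
    linarith
  · exact hb
  · have := (h ((d - c + 1) / b) (div_nonneg (by linarith) hb.le)).2
    rw [div_mul_cancel₀ _ hb.ne'] at this
    linarith

section Plane

local notation "ℝ²" => EuclideanSpace ℝ (Fin 2)

def wedge (u : ℝ²) : ℝ² →ₗ[ℝ] ℝ where
  toFun p := u 0 * p 1 - u 1 * p 0
  map_add' p q := by simp only [PiLp.add_apply]; ring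
  map_smul' c p := by simp only [PiLp.smul_apply, smul_eq_mul, RingHom.id_apply]; ring

theorem wedge_apply (u p : ℝ²) : wedge u p = u 0 * p 1 - u 1 * p 0 := rfl

theorem wedge_self (u : ℝ²) : wedge u u = 0 := by rw [wedge_apply]; ring

theorem exists_eq_smul_of_wedge_eq_zero {u p : ℝ²} (hu₀ : u ≠ 0) (h : wedge u p = 0) :
    ∃ t : ℝ, p = t • u := by
  rw [wedge_apply] at h
  by_cases h0 : u 0 = 0
  · have h1 : u 1 ≠ 0 := fun h1 => hu₀ (PiLp.ext (Fin.forall_fin_two.mpr ⟨h0, h1⟩))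
    refine ⟨p 1 / u 1, PiLp.ext (Fin.forall_fin_two.mpr ⟨?_, ?_⟩)⟩
    · simp only [PiLp.smul_apply, smul_eq_mul]; field_simp; simp_all
    · simp only [PiLp.smul_apply, smul_eq_mul]; field_simp
  · refine ⟨p 0 / u 0, PiLp.ext (Fin.forall_fin_two.mpr ⟨?_, ?_⟩)⟩
    · simp only [PiLp.smul_apply, smul_eq_mul]; field_simp
    · simp only [PiLp.smul_apply, smul_eq_mul]; field_simp; linarith

theorem eq_smul_add_smul_of_wedge_ne_zero {u v : ℝ²} (h : wedge u v ≠ 0) (w : ℝ²) :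
    w = (wedge w v / wedge u v) • u + (wedge u w / wedge u v) • v := by
  refine PiLp.ext (Fin.forall_fin_two.mpr ⟨?_, ?_⟩) <;>
  · simp only [PiLp.add_apply, PiLp.smul_apply, smul_eq_mul]
    field_simp
    simp only [wedge_apply]
    ring

variable {K : Set ℝ²} {x y u v w : ℝ²}

theorem IsExtreme.exists_pos_smul_of_wedge_eq_zero (hℓ : IsExtreme ℝ K (halfLine x u))
    (hu₀ : u ≠ 0) (hu : u ∈ recessionCone K) (hv : v ∈ recessionCone K) (hv₀ : v ≠ 0)
    (h : wedge u v = 0) : ∃ c : ℝ, 0 < c ∧ v = c • u := by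
  obtain ⟨c, rfl⟩ := exists_eq_smul_of_wedge_eq_zero hu₀ h
  refine ⟨c, lt_of_not_ge fun hc => hℓ.neg_notMem_recessionCone hu₀ hu ?_, rfl⟩
  have hc₀ : c ≠ 0 := by rintro rfl; exact hv₀ (zero_smul ℝ u)
  convert smul_mem_recessionCone hv (neg_nonneg.mpr (inv_nonpos.mpr hc)) using 1
  rw [smul_smul, neg_mul, inv_mul_cancel₀ hc₀, neg_one_smul]

theorem IsExtreme.eq_of_wedge_eq (hℓ : IsExtreme ℝ K (halfLine x u))
    (hℓ' : IsExtreme ℝ K (halfLine y u)) (hu₀ : u ≠ 0) (h : wedge u x = wedge u y) : x = y := by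
  obtain ⟨r, hr⟩ := exists_eq_smul_of_wedge_eq_zero hu₀ (p := y - x) (by rw [map_sub, h, sub_self])
  exact hℓ.eq_of_eq_add_smul hℓ' hu₀ (by rw [← hr]; abel)

theorem exists_pos_smul_among_three {x₁ x₂ x₃ u₁ u₂ u₃ : ℝ²}
    (h₁ : IsExtreme ℝ K (halfLine x₁ u₁)) (h₂ : IsExtreme ℝ K (halfLine x₂ u₂))
    (h₃ : IsExtreme ℝ K (halfLine x₃ u₃)) (hu₁ : u₁ ≠ 0) (hu₂ : u₂ ≠ 0) (hu₃ : u₃ ≠ 0)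
    (hr₁ : u₁ ∈ recessionCone K) (hr₂ : u₂ ∈ recessionCone K) (hr₃ : u₃ ∈ recessionCone K) :
    (∃ c : ℝ, 0 < c ∧ u₂ = c • u₁) ∨ (∃ c : ℝ, 0 < c ∧ u₃ = c • u₁) ∨
      ∃ c : ℝ, 0 < c ∧ u₃ = c • u₂ := by
  by_cases h₁₂ : wedge u₁ u₂ = 0
  · exact Or.inl (h₁.exists_pos_smul_of_wedge_eq_zero hu₁ hr₁ hr₂ hu₂ h₁₂)
  set α := wedge u₃ u₂ / wedge u₁ u₂
  set β := wedge u₁ u₃ / wedge u₁ u₂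
  have h₃₁₂ : u₃ = α • u₁ + β • u₂ := eq_smul_add_smul_of_wedge_ne_zero h₁₂ u₃
  rcases lt_or_ge 0 α with hα | hα
  · exact Or.inr (Or.inl (h₁.exists_pos_smul_of_eq_smul_add_smul h₃ hr₁ hr₂ hr₃ hu₁ hu₃ hα h₃₁₂))
  rcases lt_or_ge 0 β with hβ | hβ
  · exact Or.inr (Or.inr (h₂.exists_pos_smul_of_eq_smul_add_smul h₃ hr₂ hr₁ hr₃ hu₂ hu₃ hβ
      (h₃₁₂.trans (add_comm _ _))))
  · -- Otherwise `-u₃` would be a nonnegative combination of `u₁` and `u₂`.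
    refine absurd ?_ (h₃.neg_notMem_recessionCone hu₃ hr₃)
    rw [h₃₁₂, neg_add, ← neg_smul, ← neg_smul]
    exact add_mem_recessionCone (smul_mem_recessionCone hr₁ (neg_nonneg.mpr hα))
      (smul_mem_recessionCone hr₂ (neg_nonneg.mpr hβ))

theorem IsExtreme.halfLine_eq_or_eq {xa xb : ℝ²} (ha : IsExtreme ℝ K (halfLine xa u))
    (hb : IsExtreme ℝ K (halfLine xb u)) (hu₀ : u ≠ 0) (hu : u ∈ recessionCone K)
    (hab : halfLine xa u ≠ halfLine xb u) (hℓ : IsExtreme ℝ K (halfLine x v)) (hv₀ : v ≠ 0)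
    (hv : v ∈ recessionCone K) : halfLine x v = halfLine xa u ∨ halfLine x v = halfLine xb u := by
  set φ := wedge u
  have hφu : φ u = 0 := wedge_self u
  have hker : ∀ w, φ w = 0 → ∃ t : ℝ, w = t • u := fun w => exists_eq_smul_of_wedge_eq_zero hu₀
  have hne : φ xa ≠ φ xb := fun h => hab (by rw [ha.eq_of_wedge_eq hb hu₀ h])
  wlog hlt : φ xa < φ xb generalizing xa xb
  · exact (this hb ha hab.symm hne.symm (hne.symm.lt_of_le (not_lt.mp hlt))).symm
  have hxa : xa ∈ K := ha.subset left_mem_halfLine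
  have hxb : xb ∈ K := hb.subset left_mem_halfLine
  have hx : x ∈ K := hℓ.subset left_mem_halfLine
  -- The line through each of the two parallel half-lines supports `K`.
  have hstrip : ∀ p ∈ K, φ p ∈ Icc (φ xa) (φ xb) := fun p hp =>
    ⟨not_lt.mp fun h => ha.map_notMem_Ioo hu φ hφu hker hp hxb ⟨h, hlt⟩,
      not_lt.mp fun h => hb.map_notMem_Ioo hu φ hφu hker hxa hp ⟨hlt, h⟩⟩
  have hφv : φ v = 0 := eq_zero_of_forall_add_mul_mem_Icc fun t ht => by
    simpa [mul_comm] using hstrip _ (hv x hx t ht)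
  obtain ⟨c, hc, rfl⟩ := ha.exists_pos_smul_of_wedge_eq_zero hu₀ hu hv hv₀ hφv
  rw [halfLine_smul hc] at hℓ ⊢
  have hφx : φ x = φ xa ∨ φ x = φ xb := by
    obtain ⟨h₁, h₂⟩ := hstrip x hx
    by_contra! h
    exact hℓ.map_notMem_Ioo hu φ hφu hker hxa hxb ⟨h₁.lt_of_ne h.1.symm, h₂.lt_of_ne h.2⟩
  rcases hφx with h | h
  · exact Or.inl (by rw [hℓ.eq_of_wedge_eq ha hu₀ h])
  · exact Or.inr (by rw [hℓ.eq_of_wedge_eq hb hu₀ h])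

end Plane

theorem IsExtremeHalfLine.exists_eq_halfLine {n : ℕ} {K ℓ : Set (EuclideanSpace ℝ (Fin n))}
    (hK : IsClosed K) (hconv : Convex ℝ K) (h : IsExtremeHalfLine K ℓ) :
    ∃ x u, u ≠ 0 ∧ u ∈ recessionCone K ∧ ℓ = halfLine x u ∧ IsExtreme ℝ K (halfLine x u) := by
  obtain ⟨⟨x, u, hu, rfl⟩, hfr, hseg⟩ := h
  have hsub : halfLine x u ⊆ K := hfr.trans hK.frontier_subset
  exact ⟨x, u, hu, mem_recessionCone_of_halfLine_subset hK hconv hsub, rfl,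
    ⟨hsub, fun p hp q hq z hz hpq => (hseg p hp q hq ⟨z, hpq, hz⟩).1⟩⟩

/-- Every closed convex set in `ℝ²` has only finitely many extreme half-lines. -/
theorem finite_extreme_halfLines
    (K : Set (EuclideanSpace ℝ (Fin 2))) (hK : IsClosed K) (hconv : Convex ℝ K) :
    {ℓ : Set (EuclideanSpace ℝ (Fin 2)) | IsExtremeHalfLine K ℓ}.Finite := by
  by_contra hinf
  obtain ⟨T, hT, -, hT₃⟩ := Set.Infinite.exists_subset_ncard_eq hinf 3
  obtain ⟨ℓ₁, ℓ₂, ℓ₃, h₁₂, h₁₃, h₂₃, rfl⟩ := ncard_eq_three.mp hT₃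
  have hrep := fun ℓ (hℓ : ℓ ∈ ({ℓ₁, ℓ₂, ℓ₃} : Set _)) => (hT hℓ).exists_eq_halfLine hK hconv
  obtain ⟨x₁, u₁, hu₁, hr₁, rfl, he₁⟩ := hrep ℓ₁ (by simp)
  obtain ⟨x₂, u₂, hu₂, hr₂, rfl, he₂⟩ := hrep ℓ₂ (by simp)
  obtain ⟨x₃, u₃, hu₃, hr₃, rfl, he₃⟩ := hrep ℓ₃ (by simp)
  rcases exists_pos_smul_among_three he₁ he₂ he₃ hu₁ hu₂ hu₃ hr₁ hr₂ hr₃ with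
    ⟨c, hc, rfl⟩ | ⟨c, hc, rfl⟩ | ⟨c, hc, rfl⟩
  · rw [halfLine_smul hc] at h₁₂ h₂₃ he₂
    rcases he₁.halfLine_eq_or_eq he₂ hu₁ hr₁ h₁₂ he₃ hu₃ hr₃ with h | h
    exacts [h₁₃ h.symm, h₂₃ h.symm]
  · rw [halfLine_smul hc] at h₁₃ h₂₃ he₃
    rcases he₁.halfLine_eq_or_eq he₃ hu₁ hr₁ h₁₃ he₂ hu₂ hr₂ with h | h
    exacts [h₁₂ h.symm, h₂₃ h]
  · rw [halfLine_smul hc] at h₁₃ h₂₃ he₃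
    rcases he₂.halfLine_eq_or_eq he₃ hu₂ hr₂ h₂₃ he₁ hu₁ hr₁ with h | h
    exacts [h₁₂ h, h₁₃ h]
end

section
/- Let b be a Schwartz function on ℝⁿ whose Fourier transform 𝓕b is supported in the closed unit ball B̄(0,1), let r > 0, and let y₁, …, y_k ∈ ℝⁿ satisfy |y_i − y_j| ≥ 2r for all i ≠ j. Define b_j(x) = rⁿ · e^{2πi⟨x, y_j⟩} · b(rx), so that 𝓕b_j(ξ) = 𝓕b((ξ − y_j)/r). Then for every R > 0, ∫_{ℝⁿ} |Σ_{j=1}^k b_j(x)| dx ≤ vol(B̄(0,1))^{1/2} · R^{n/2} · √k · ‖b‖_{L²} + (k/R) · ∫_{ℝⁿ} |x| · |b(x)| dx. -/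
/-!
Split the integral at the ball `B̄(0, R/r)`. On the ball, Cauchy–Schwarz bounds it by
`vol(B̄(0, R/r))^{1/2} ‖Σ b_j‖₂`, and the `b_j` are pairwise orthogonal: by Plancherel,
`⟪b_i, b_j⟫` is a multiple of `∫ conj 𝓕b(ξ) 𝓕b(ξ - w) dξ` with `|w| = |y_i - y_j| / r ≥ 2`, and
the two unit balls carrying this integrand meet in at most one point. Hence
`‖Σ b_j‖₂² = k rⁿ ‖b‖₂²`. Off the ball `1 ≤ r|x|/R`, so after rescaling each `b_j` contributes at
most `(1/R) ∫ |x| |b(x)| dx`.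
-/

open MeasureTheory Real Set Metric
open scoped ENNReal FourierTransform RealInnerProductSpace SchwartzMap
open Module
open scoped InnerProductSpace

theorem eq_midpoint_of_dist_le {E P : Type*} [NormedAddCommGroup E] [NormedSpace ℝ E]
    [StrictConvexSpace ℝ E] [MetricSpace P] [NormedAddTorsor E P] {x y z : P} {ρ : ℝ}
    (hxy : dist x y ≤ ρ) (hyz : dist y z ≤ ρ) (hxz : 2 * ρ ≤ dist x z) :
    y = midpoint ℝ x z := by
  have := dist_triangle x y z
  exact eq_midpoint_of_dist_eq_half (by linarith) (by linarith)

theorem MeasureTheory.MemLp.comp_smul {E F : Type*} [NormedAddCommGroup E] [NormedSpace ℝ E]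
    [MeasurableSpace E] [BorelSpace E] [FiniteDimensional ℝ E] [NormedAddCommGroup F]
    {μ : Measure E} [μ.IsAddHaarMeasure] {f : E → F} {p : ℝ≥0∞} (hf : MemLp f p μ) {r : ℝ}
    (hr : r ≠ 0) : MemLp (fun x ↦ f (r • x)) p μ := by
  refine MemLp.comp_of_map ?_ (measurable_const_smul r).aemeasurable
  rw [Measure.map_addHaar_smul μ hr]
  exact hf.smul_measure ENNReal.ofReal_ne_top

section MeasureTheory

variable {α : Type*} [MeasurableSpace α] {μ : Measure α}

theorem MeasureTheory.MemLp.toReal_eLpNorm_two {E : Type*} [NormedAddCommGroup E] {f : α → E}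
    (hf : MemLp f 2 μ) : (eLpNorm f 2 μ).toReal = √(∫ x, ‖f x‖ ^ 2 ∂μ) := by
  rw [hf.eLpNorm_eq_integral_rpow_norm two_ne_zero ENNReal.ofNat_ne_top,
    ENNReal.toReal_ofReal (by positivity), Real.sqrt_eq_rpow]
  norm_num

theorem setIntegral_norm_le_sqrt_mul_sqrt {E : Type*} [NormedAddCommGroup E] {f : α → E}
    (hf : MemLp f 2 μ) {s : Set α} (hs : μ s ≠ ⊤) :
    ∫ x in s, ‖f x‖ ∂μ ≤ √(μ.real s) * √(∫ x, ‖f x‖ ^ 2 ∂μ) := by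
  have : IsFiniteMeasure (μ.restrict s) := isFiniteMeasure_restrict.2 hs
  have hCS := integral_mul_le_Lp_mul_Lq_of_nonneg (μ := μ.restrict s) Real.HolderConjugate.two_two
    (f := fun _ ↦ (1 : ℝ)) (g := fun x ↦ ‖f x‖) (ae_of_all _ fun _ ↦ zero_le_one)
    (ae_of_all _ fun _ ↦ norm_nonneg _) (memLp_const 1) (by simpa using hf.norm.restrict s)
  simp only [one_mul, one_pow, integral_const, smul_eq_mul, mul_one, Real.rpow_two,
    ← Real.sqrt_eq_rpow, measureReal_restrict_apply_univ] at hCS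
  refine hCS.trans (mul_le_mul_of_nonneg_left (Real.sqrt_le_sqrt ?_) (Real.sqrt_nonneg _))
  exact setIntegral_le_integral ((memLp_two_iff_integrable_sq_norm hf.1).1 hf)
    (ae_of_all _ fun _ ↦ by positivity)

theorem integral_norm_sum_sq_of_orthogonal {ι 𝕜 E : Type*} [RCLike 𝕜] [NormedAddCommGroup E]
    [InnerProductSpace 𝕜 E] [Fintype ι] {f : ι → α → E} (hf : ∀ i, MemLp (f i) 2 μ)
    (horth : ∀ i j, i ≠ j → ∫ x, ⟪f i x, f j x⟫_𝕜 ∂μ = 0) :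
    ∫ x, ‖∑ i, f i x‖ ^ 2 ∂μ = ∑ i, ∫ x, ‖f i x‖ ^ 2 ∂μ := by
  have hint : ∀ i j, Integrable (fun x ↦ ⟪f i x, f j x⟫_𝕜) μ := fun i j ↦
    ((hf i).norm.integrable_mul (hf j).norm).mono' ((hf i).1.inner (hf j).1)
      (ae_of_all _ fun x ↦ norm_inner_le_norm _ _)
  have hexpand : ∀ x, ‖∑ i, f i x‖ ^ 2 = RCLike.re (∑ i, ∑ j, ⟪f i x, f j x⟫_𝕜) := fun x ↦ by
    rw [@norm_sq_eq_re_inner 𝕜, sum_inner]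
    simp only [inner_sum]
  calc ∫ x, ‖∑ i, f i x‖ ^ 2 ∂μ
      = RCLike.re (∑ i, ∑ j, ∫ x, ⟪f i x, f j x⟫_𝕜 ∂μ) := by
        simp_rw [hexpand]
        rw [integral_re (integrable_finsetSum _ fun i _ ↦ integrable_finsetSum _ fun j _ ↦ hint i j),
          integral_finsetSum _ fun i _ ↦ integrable_finsetSum _ fun j _ ↦ hint i j]
        simp only [integral_finsetSum _ fun j _ ↦ hint _ j]
    _ = ∑ i, RCLike.re (∫ x, ⟪f i x, f i x⟫_𝕜 ∂μ) := by
        rw [map_sum]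
        exact Finset.sum_congr rfl fun i _ ↦ by
          rw [Finset.sum_eq_single i (fun j _ hji ↦ horth i j hji.symm) (by simp)]
    _ = ∑ i, ∫ x, ‖f i x‖ ^ 2 ∂μ := by
        refine Finset.sum_congr rfl fun i _ ↦ ?_
        rw [← integral_re (hint i i)]
        simp only [← @norm_sq_eq_re_inner 𝕜]

end MeasureTheory

section Fourier

variable {V : Type*} [NormedAddCommGroup V] [InnerProductSpace ℝ V] [FiniteDimensional ℝ V]
  [MeasurableSpace V] [BorelSpace V]
  {H : Type*} [NormedAddCommGroup H] [InnerProductSpace ℂ H] [CompleteSpace H]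

theorem fourierInv_fourierChar_smul {E : Type*} [NormedAddCommGroup E] [NormedSpace ℂ E]
    (f : V → E) (w ξ : V) :
    𝓕⁻ (fun v ↦ 𝐞 ⟪v, w⟫ • f v) ξ = 𝓕⁻ f (ξ + w) := by
  simp only [Real.fourierInv_eq, smul_smul, ← AddChar.map_add_eq_mul, inner_add_right]

theorem SchwartzMap.integral_inner_eq_integral_inner_fourierInv (f : 𝓢(V, H)) {g : V → H}
    (hg : Integrable g) : ∫ x, ⟪f x, g x⟫_ℂ = ∫ ξ, ⟪𝓕⁻ f ξ, 𝓕⁻ g ξ⟫_ℂ := by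
  have hsesq := VectorFourier.integral_sesq_fourierIntegral_eq_neg_flip (innerSL ℂ)
    (L := innerₗ V) Real.continuous_fourierChar continuous_inner (𝓕⁻ f).integrable (μ := volume) hg
  have hinv : 𝓕 (𝓕⁻ (f : V → H)) = f := by
    rw [← SchwartzMap.fourierInv_coe, ← SchwartzMap.fourier_coe,
      FourierTransform.fourier_fourierInv_eq]
  rw [flip_innerₗ, SchwartzMap.fourierInv_coe] at hsesq
  rw [SchwartzMap.fourierInv_coe]
  conv_lhs => rw [← hinv]
  exact hsesq

theorem SchwartzMap.integral_inner_fourierChar_smul_eq_zero (b : 𝓢(V, H)) {ρ : ℝ} (hρ : 0 < ρ)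
    (hb : tsupport (𝓕 ⇑b) ⊆ closedBall 0 ρ) {w : V} (hw : 2 * ρ ≤ ‖w‖) :
    ∫ u, ⟪b u, 𝐞 ⟪u, w⟫ • b u⟫_ℂ = 0 := by
  have hmod : Integrable fun u ↦ 𝐞 ⟪u, w⟫ • b u := by
    simpa [inner_neg_right] using (Real.fourierIntegral_convergent_iff (-w)).2 b.integrable
  have hsupp : ∀ ζ, 𝓕⁻ ⇑b ζ ≠ 0 → ‖ζ‖ ≤ ρ := fun ζ hζ ↦ by
    rw [Real.fourierInv_eq_fourier_neg] at hζ
    simpa using hb (subset_tsupport _ hζ)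
  have : Nontrivial V := ⟨⟨w, 0, norm_pos_iff.1 (by linarith)⟩⟩
  have hsub : {ξ | ⟪𝓕⁻ ⇑b ξ, 𝓕⁻ ⇑b (ξ + w)⟫_ℂ ≠ 0} ⊆ {midpoint ℝ (-w) 0} := by
    intro ξ hξ
    have h₁ : ‖ξ‖ ≤ ρ := hsupp ξ fun h ↦ hξ (by simp [h])
    have h₂ : ‖ξ + w‖ ≤ ρ := hsupp _ fun h ↦ hξ (by simp [h])
    refine eq_midpoint_of_dist_le ?_ (by simpa using h₁) (by simpa using hw)
    rwa [dist_eq_norm, ← norm_neg, neg_sub, sub_neg_eq_add]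
  rw [b.integral_inner_eq_integral_inner_fourierInv hmod]
  simp only [SchwartzMap.fourierInv_coe, fourierInv_fourierChar_smul]
  exact integral_eq_zero_of_ae (measure_mono_null hsub (measure_singleton _))

end Fourier

section ModulatedDilate

variable {V : Type*} [NormedAddCommGroup V] [InnerProductSpace ℝ V]

noncomputable def modulatedDilate (b : V → ℂ) (r : ℝ) (y x : V) : ℂ :=
  (r : ℂ) ^ finrank ℝ V * 𝐞 ⟪x, y⟫ * b (r • x)

theorem norm_modulatedDilate (b : V → ℂ) {r : ℝ} (hr : 0 ≤ r) (y x : V) :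
    ‖modulatedDilate b r y x‖ = r ^ finrank ℝ V * ‖b (r • x)‖ := by
  simp [modulatedDilate, Complex.norm_real, abs_of_nonneg hr, Circle.norm_coe]

theorem inner_modulatedDilate (b : V → ℂ) {r : ℝ} (hr : r ≠ 0) (y z x : V) :
    ⟪modulatedDilate b r y x, modulatedDilate b r z x⟫_ℂ =
      ((r ^ finrank ℝ V) ^ 2 : ℝ) * ⟪b (r • x), 𝐞 ⟪r • x, r⁻¹ • (z - y)⟫ • b (r • x)⟫_ℂ := by
  have hphase : 𝐞 ⟪r • x, r⁻¹ • (z - y)⟫ = 𝐞 ⟪x, z⟫ / 𝐞 ⟪x, y⟫ := by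
    rw [real_inner_smul_left, real_inner_smul_right, ← mul_assoc, mul_inv_cancel₀ hr, one_mul,
      inner_sub_right, AddChar.map_sub_eq_div]
  simp only [modulatedDilate, hphase, RCLike.inner_apply, Circle.smul_def, smul_eq_mul, map_mul,
    div_eq_mul_inv, Circle.coe_mul, Circle.coe_inv_eq_conj, map_pow, Complex.conj_ofReal]
  push_cast
  ring

variable [FiniteDimensional ℝ V] [MeasurableSpace V] [BorelSpace V]

theorem memLp_modulatedDilate {b : V → ℂ} {p : ℝ≥0∞} (hb : MemLp b p) {r : ℝ} (hr : 0 < r)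
    (y : V) : MemLp (modulatedDilate b r y) p := by
  have hdil := (hb.comp_smul hr.ne').const_mul ((r : ℂ) ^ finrank ℝ V)
  have hχ : Continuous fun x : V ↦ ((𝐞 ⟪x, y⟫ : Circle) : ℂ) := by fun_prop
  refine hdil.mono ?_ (ae_of_all _ fun x ↦ ?_)
  · have hfac : modulatedDilate b r y = (fun x ↦ ((𝐞 ⟪x, y⟫ : Circle) : ℂ)) * fun x ↦
        (r : ℂ) ^ finrank ℝ V * b (r • x) := by
      ext x
      simp only [modulatedDilate, Pi.mul_apply]
      ring
    rw [hfac]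
    exact hχ.aestronglyMeasurable.mul hdil.1
  · simp [norm_modulatedDilate b hr.le, Complex.norm_real, abs_of_nonneg hr.le]

theorem integral_norm_modulatedDilate_sq (b : V → ℂ) {r : ℝ} (hr : 0 < r) (y : V) :
    ∫ x, ‖modulatedDilate b r y x‖ ^ 2 = r ^ finrank ℝ V * ∫ u, ‖b u‖ ^ 2 := by
  simp only [norm_modulatedDilate b hr.le, mul_pow, integral_const_mul]
  rw [Measure.integral_comp_smul_of_nonneg volume (fun u ↦ ‖b u‖ ^ 2) r (hR := hr.le), smul_eq_mul]
  have : r ^ finrank ℝ V ≠ 0 := by positivity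
  field_simp

theorem integral_inner_modulatedDilate (b : V → ℂ) {r : ℝ} (hr : 0 < r) (y z : V) :
    ∫ x, ⟪modulatedDilate b r y x, modulatedDilate b r z x⟫_ℂ =
      r ^ finrank ℝ V * ∫ u, ⟪b u, 𝐞 ⟪u, r⁻¹ • (z - y)⟫ • b u⟫_ℂ := by
  simp only [inner_modulatedDilate b hr.ne', integral_const_mul]
  rw [Measure.integral_comp_smul_of_nonneg volume (fun u ↦ ⟪b u, 𝐞 ⟪u, r⁻¹ • (z - y)⟫ • b u⟫_ℂ) r
    (hR := hr.le), Complex.real_smul]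
  push_cast
  field_simp

theorem integral_norm_sum_modulatedDilate_sq (b : 𝓢(V, ℂ)) {ρ : ℝ} (hρ : 0 < ρ)
    (hb : tsupport (𝓕 ⇑b) ⊆ closedBall 0 ρ) {r : ℝ} (hr : 0 < r) {ι : Type*} [Fintype ι]
    {y : ι → V} (hy : ∀ i j, i ≠ j → 2 * ρ * r ≤ dist (y i) (y j)) :
    ∫ x, ‖∑ i, modulatedDilate b r (y i) x‖ ^ 2 =
      Fintype.card ι * r ^ finrank ℝ V * ∫ u, ‖b u‖ ^ 2 := by
  rw [integral_norm_sum_sq_of_orthogonal (𝕜 := ℂ) (fun i ↦ memLp_modulatedDilate (b.memLp 2) hr _)]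
  · simp [integral_norm_modulatedDilate_sq _ hr, mul_assoc]
  · intro i j hij
    rw [integral_inner_modulatedDilate _ hr, b.integral_inner_fourierChar_smul_eq_zero hρ hb, mul_zero]
    rw [norm_smul, norm_inv, Real.norm_of_nonneg hr.le, ← dist_eq_norm, le_inv_mul_iff₀ hr,
      dist_comm]
    linarith [hy i j hij]

theorem setIntegral_closedBall_norm_sum_modulatedDilate_le (b : 𝓢(V, ℂ)) {ρ : ℝ} (hρ : 0 < ρ)
    (hb : tsupport (𝓕 ⇑b) ⊆ closedBall 0 ρ) {r : ℝ} (hr : 0 < r) {ι : Type*} [Fintype ι]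
    {y : ι → V} (hy : ∀ i j, i ≠ j → 2 * ρ * r ≤ dist (y i) (y j)) {R : ℝ} (hR : 0 < R) :
    ∫ x in closedBall 0 (R / r), ‖∑ i, modulatedDilate b r (y i) x‖ ≤
      (volume (closedBall (0 : V) 1)).toReal ^ ((1 : ℝ) / 2) * R ^ ((finrank ℝ V : ℝ) / 2) *
        √(Fintype.card ι) * (eLpNorm b 2 volume).toReal := by
  have hsum : MemLp (fun x ↦ ∑ i, modulatedDilate b r (y i) x) 2 :=
    memLp_finsetSum _ fun i _ ↦ memLp_modulatedDilate (b.memLp 2) hr _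
  refine (setIntegral_norm_le_sqrt_mul_sqrt hsum measure_closedBall_lt_top.ne).trans_eq ?_
  have hRpow : R ^ ((finrank ℝ V : ℝ) / 2) = √(R ^ finrank ℝ V) := by
    rw [Real.sqrt_eq_rpow, ← Real.rpow_natCast, ← Real.rpow_mul hR.le]
    ring_nf
  rw [integral_norm_sum_modulatedDilate_sq b hρ hb hr hy, measureReal_def,
    Measure.addHaar_closedBall' _ _ (by positivity), (b.memLp 2 volume).toReal_eLpNorm_two, hRpow,
    ← Real.sqrt_eq_rpow, ENNReal.toReal_mul, ENNReal.toReal_ofReal (by positivity)]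
  have hI : 0 ≤ ∫ u, ‖b u‖ ^ 2 := integral_nonneg fun u ↦ by positivity
  rw [← Real.sqrt_mul' _ (mul_nonneg (by positivity) hI), ← Real.sqrt_mul' _ (pow_nonneg hR.le _),
    ← Real.sqrt_mul' _ (Nat.cast_nonneg _), ← Real.sqrt_mul' _ hI]
  congr 1
  rw [div_pow]
  field_simp

theorem setIntegral_compl_closedBall_norm_modulatedDilate_le {b : V → ℂ}
    (hb : Integrable fun u ↦ ‖u‖ * ‖b u‖) {r R : ℝ} (hr : 0 < r) (hR : 0 < R) (y : V) :
    ∫ x in (closedBall 0 (R / r))ᶜ, ‖modulatedDilate b r y x‖ ≤ (∫ u, ‖u‖ * ‖b u‖) / R := by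
  set g : V → ℝ := fun x ↦ r ^ finrank ℝ V * (‖r • x‖ * ‖b (r • x)‖) / R
  have hg : Integrable g := ((hb.comp_smul hr.ne').const_mul _).div_const _
  calc ∫ x in (closedBall 0 (R / r))ᶜ, ‖modulatedDilate b r y x‖
      ≤ ∫ x in (closedBall 0 (R / r))ᶜ, g x := by
        refine integral_mono_of_nonneg (ae_of_all _ fun _ ↦ norm_nonneg _) hg.integrableOn ?_
        filter_upwards [ae_restrict_mem measurableSet_closedBall.compl] with x hx
        have hRx : R ≤ ‖r • x‖ := by
          rw [mem_compl_iff, mem_closedBall, dist_zero_right, not_le, div_lt_iff₀ hr] at hx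
          rw [norm_smul, Real.norm_of_nonneg hr.le]
          linarith
        simp only [g, norm_modulatedDilate b hr.le]
        rw [mul_div_assoc]
        gcongr
        rw [le_div_iff₀ hR, mul_comm]
        exact mul_le_mul_of_nonneg_right hRx (norm_nonneg _)
    _ ≤ ∫ x, g x := setIntegral_le_integral hg (ae_of_all _ fun _ ↦ by positivity)
    _ = (∫ u, ‖u‖ * ‖b u‖) / R := by
        simp only [g, integral_div, integral_const_mul]
        rw [Measure.integral_comp_smul_of_nonneg volume (fun u ↦ ‖u‖ * ‖b u‖) r (hR := hr.le),
          smul_eq_mul]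
        have : r ^ finrank ℝ V ≠ 0 := by positivity
        field_simp

theorem setIntegral_compl_closedBall_norm_sum_modulatedDilate_le (b : 𝓢(V, ℂ)) {r R : ℝ}
    (hr : 0 < r) (hR : 0 < R) {ι : Type*} [Fintype ι] (y : ι → V) :
    ∫ x in (closedBall 0 (R / r))ᶜ, ‖∑ i, modulatedDilate b r (y i) x‖ ≤
      Fintype.card ι / R * ∫ u, ‖u‖ * ‖b u‖ := by
  have hint : ∀ i, IntegrableOn (fun x ↦ ‖modulatedDilate b r (y i) x‖) (closedBall 0 (R / r))ᶜ :=
    fun i ↦ (memLp_one_iff_integrable.1 (memLp_modulatedDilate (b.memLp 1) hr _)).norm.integrableOn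
  have hmoment : Integrable fun u : V ↦ ‖u‖ * ‖b u‖ := by
    simpa using b.integrable_pow_mul volume 1
  calc ∫ x in (closedBall 0 (R / r))ᶜ, ‖∑ i, modulatedDilate b r (y i) x‖
      ≤ ∫ x in (closedBall 0 (R / r))ᶜ, ∑ i, ‖modulatedDilate b r (y i) x‖ :=
        integral_mono_of_nonneg (ae_of_all _ fun _ ↦ norm_nonneg _)
          (integrable_finsetSum _ fun i _ ↦ hint i) (ae_of_all _ fun _ ↦ norm_sum_le _ _)
    _ = ∑ i, ∫ x in (closedBall 0 (R / r))ᶜ, ‖modulatedDilate b r (y i) x‖ :=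
        integral_finsetSum _ fun i _ ↦ hint i
    _ ≤ ∑ _i : ι, (∫ u, ‖u‖ * ‖b u‖) / R :=
        Finset.sum_le_sum fun i _ ↦
          setIntegral_compl_closedBall_norm_modulatedDilate_le hmoment hr hR (y i)
    _ = Fintype.card ι / R * ∫ u, ‖u‖ * ‖b u‖ := by
        rw [Finset.sum_const, Finset.card_univ, nsmul_eq_mul]
        ring

end ModulatedDilate

/-- The `L¹`-bound for a sum of modulated dilates of a band-limited Schwartz function:
if `supp 𝓕b ⊆ B̄(0,1)` and the frequencies `y_j` are `2r`-separated, then with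
`b_j(x) = rⁿ e^{2πi⟨x,y_j⟩} b(rx)` one has, for every `R > 0`,
`‖Σ b_j‖₁ ≤ vol(B̄(0,1))^{1/2} R^{n/2} √k ‖b‖₂ + (k/R) ∫ |x||b(x)| dx`. -/
theorem l1_bound_of_modulated_dilates
    (n k : ℕ) (b : 𝓢(EuclideanSpace ℝ (Fin n), ℂ))
    (hb : tsupport (𝓕 ⇑b) ⊆ closedBall (0 : EuclideanSpace ℝ (Fin n)) 1)
    (r : ℝ) (hr : 0 < r)
    (y : Fin k → EuclideanSpace ℝ (Fin n))
    (hy : ∀ i j, i ≠ j → 2 * r ≤ dist (y i) (y j))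
    (R : ℝ) (hR : 0 < R) :
    ∫ x, ‖∑ j, (r : ℂ) ^ n * Complex.exp (2 * π * Complex.I * (⟪x, y j⟫ : ℂ)) * b (r • x)‖ ≤
      (volume (closedBall (0 : EuclideanSpace ℝ (Fin n)) 1)).toReal ^ ((1 : ℝ) / 2) *
          R ^ ((n : ℝ) / 2) * Real.sqrt k * (eLpNorm ⇑b 2 volume).toReal +
        ((k : ℝ) / R) * ∫ x, ‖x‖ * ‖b x‖ := by
  have hsummand : ∀ x j, (r : ℂ) ^ n * Complex.exp (2 * π * Complex.I * (⟪x, y j⟫ : ℂ)) *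
      b (r • x) = modulatedDilate b r (y j) x := fun x j ↦ by
    rw [modulatedDilate, finrank_euclideanSpace_fin, Real.fourierChar_apply]
    push_cast
    ring_nf
  have hsum : Integrable fun x ↦ ∑ j, modulatedDilate b r (y j) x :=
    integrable_finsetSum _ fun j _ ↦
      memLp_one_iff_integrable.1 (memLp_modulatedDilate (b.memLp 1) hr _)
  have hball := setIntegral_closedBall_norm_sum_modulatedDilate_le b one_pos hb hr
    (by simpa using hy) hR
  have htail := setIntegral_compl_closedBall_norm_sum_modulatedDilate_le b hr hR y
  simp only [finrank_euclideanSpace_fin, Fintype.card_fin] at hball htail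
  simp only [hsummand]
  rw [← integral_add_compl measurableSet_closedBall hsum.norm]
  exact add_le_add hball htail
end
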